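/- arXiv:2411.10017 — 3 statements merged into one kernel-verified Lean document; each statement's English description precedes it below -/
import Mathlib

section
/- For even m ≥ 4 and n divisible by m/2, with n' = 2n/m, a bit string x ∈ {0,1}^n is Pareto-optimal for the m-objective LOTZ function if and only if for every k ∈ [1, m/2] there exists i ∈ [0, n'] such that the k-th block x_{(k-1)n'+1}, ..., x_{kn'} equals 1^i 0^{n'-i}. -/
/-- Bit of `x` at (0-indexed) position `i`, `false` if out of range. -/
def bitAt (n : ℕ) (x : Fin n → Bool) (i : ℕ) : Bool :=
  if h : i < n then x ⟨i, h⟩ else false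

/-- Number of leading ones of the substring of `x` of length `len` starting at `start`. -/
def leadOnes (n : ℕ) (x : Fin n → Bool) (start len : ℕ) : ℕ :=
  ((Finset.range len).filter (fun i => ∀ j ≤ i, bitAt n x (start + j) = true)).card

/-- Number of trailing zeros of the substring of `x` of length `len` starting at `start`. -/
def trailZeros (n : ℕ) (x : Fin n → Bool) (start len : ℕ) : ℕ :=
  ((Finset.range len).filter
    (fun i => ∀ j, i ≤ j → j < len → bitAt n x (start + j) = false)).card

/-- The `m`-objective LOTZ function on bit strings of length `n` (objectives `0`-indexed):
even `k` counts the leading ones of block `k/2`, odd `k` the trailing zeros of that block,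
where blocks are consecutive substrings of length `n' = 2n/m`. -/
def mLOTZ (m n : ℕ) (x : Fin n → Bool) (k : Fin m) : ℕ :=
  if k.val % 2 = 0 then leadOnes n x ((k.val / 2) * (2 * n / m)) (2 * n / m)
  else trailZeros n x ((k.val / 2) * (2 * n / m)) (2 * n / m)

/-- `u` strictly dominates `v`. -/
def StrictDom {m : ℕ} (u v : Fin m → ℕ) : Prop :=
  (∀ i, v i ≤ u i) ∧ ∃ i, v i < u i

/-- `x` is Pareto-optimal for `mLOTZ m n`. -/
def ParetoOpt (m n : ℕ) (x : Fin n → Bool) : Prop :=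
  ∀ y : Fin n → Bool, ¬ StrictDom (mLOTZ m n y) (mLOTZ m n x)

/-!
Each block contributes two objectives, its leading ones `L` and its trailing zeros `T`, and
`L + T ≤ n'` with equality exactly when the block is `1^i 0^(n'-i)`. If some block of `x` has
`L + T < n'`, rewriting that block as `1^L 0^(n'-L)` keeps every objective and raises `T`, so
`x` is dominated. If every block of `x` has `L + T = n'`, a weakly dominating `y` must match
`x` on both objectives of each block, since its own block sums are at most `n'`.
-/

open Finset

theorem Finset.mem_iff_lt_card_of_isLowerSet {S : Finset ℕ} (hS : IsLowerSet (S : Set ℕ))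
    (a : ℕ) : a ∈ S ↔ a < #S := by
  constructor
  · intro ha
    have : range (a + 1) ⊆ S := fun b hb => hS (Nat.lt_succ_iff.1 (mem_range.1 hb)) ha
    simpa using card_le_card this
  · intro ha
    by_contra h
    have : S ⊆ range a := fun b hb => mem_range.2 (lt_of_not_ge fun hab => h (hS hab hb))
    have := card_le_card this
    rw [card_range] at this
    omega

theorem Finset.lt_card_filter_range_iff {P : ℕ → Prop} [DecidablePred P]
    (hP : ∀ ⦃a b⦄, b ≤ a → P a → P b) {l a : ℕ} :
    a < #((range l).filter P) ↔ a < l ∧ P a := by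
  rw [← mem_iff_lt_card_of_isLowerSet, mem_filter, mem_range]
  intro a b hba ha
  simp only [coe_filter, mem_range, Set.mem_ofPred_eq] at ha ⊢
  exact ⟨hba.trans_lt ha.1, hP hba ha.2⟩

theorem Finset.sub_card_filter_range_le_iff {P : ℕ → Prop} [DecidablePred P]
    (hP : ∀ ⦃a b⦄, a ≤ b → P a → P b) {l a : ℕ} :
    l - #((range l).filter P) ≤ a ↔ (a < l → P a) := by
  have hnot := lt_card_filter_range_iff (P := fun a => ¬P a)
    (fun a b hba h hb => h (hP hba hb)) (l := l) (a := a)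
  have hcard := card_filter_add_card_filter_not (s := range l) P
  rw [card_range] at hcard
  by_cases hal : a < l
  · simp only [hal, true_and, true_imp_iff] at hnot ⊢
    constructor
    · intro h
      by_contra hPa
      exact absurd (hnot.2 hPa) (by omega)
    · intro hPa
      by_contra h
      exact hnot.1 (by omega) hPa
  · simp only [hal, false_imp_iff, iff_true]
    omega

section Block

variable {n : ℕ} {x y : Fin n → Bool} {s l i a : ℕ}

theorem lt_leadOnes_iff :
    a < leadOnes n x s l ↔ a < l ∧ ∀ j ≤ a, bitAt n x (s + j) = true :=
  lt_card_filter_range_iff fun _ _ hba h j hj => h j (hj.trans hba)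

theorem sub_trailZeros_le_iff :
    l - trailZeros n x s l ≤ a ↔ ∀ j, a ≤ j → j < l → bitAt n x (s + j) = false := by
  rw [trailZeros, sub_card_filter_range_le_iff fun _ _ hab h j hj => h j (hab.trans hj)]
  exact ⟨fun h j haj hjl => h (haj.trans_lt hjl) j haj hjl, fun h _ => h⟩

theorem trailZeros_le : trailZeros n x s l ≤ l := by
  simpa [trailZeros] using card_filter_le (range l) _

theorem leadOnes_add_trailZeros_le : leadOnes n x s l + trailZeros n x s l ≤ l := by
  by_contra! h
  have := trailZeros_le (n := n) (x := x) (s := s) (l := l)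
  obtain ⟨hal, hones⟩ :=
    lt_leadOnes_iff.1 (show l - trailZeros n x s l < leadOnes n x s l by omega)
  have := sub_trailZeros_le_iff.1 le_rfl _ le_rfl hal
  rw [hones _ le_rfl] at this
  contradiction

theorem leadOnes_eq_of_forall (hi : i ≤ l) (hx : ∀ j < l, (bitAt n x (s + j) = true ↔ j < i)) :
    leadOnes n x s l = i :=
  eq_of_forall_lt_iff fun a => by
    rw [lt_leadOnes_iff]
    constructor
    · rintro ⟨hal, hones⟩
      exact (hx a hal).1 (hones a le_rfl)
    · intro hai
      exact ⟨hai.trans_le hi, fun j hj => (hx j (by omega)).2 (by omega)⟩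

theorem trailZeros_eq_of_forall (hi : i ≤ l)
    (hx : ∀ j < l, (bitAt n x (s + j) = true ↔ j < i)) :
    trailZeros n x s l = l - i := by
  have : l - trailZeros n x s l = i := eq_of_forall_ge_iff fun a => by
    rw [sub_trailZeros_le_iff]
    constructor
    · intro hzeros
      by_contra! hai
      have := (hx a (by omega)).2 hai
      rw [hzeros a le_rfl (by omega)] at this
      contradiction
    · intro hia j haj hjl
      simpa [show ¬j < i by omega] using hx j hjl
  have := trailZeros_le (n := n) (x := x) (s := s) (l := l)
  omega

theorem forall_of_leadOnes_add_trailZeros_eq (h : leadOnes n x s l + trailZeros n x s l = l) :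
    ∀ j < l, (bitAt n x (s + j) = true ↔ j < leadOnes n x s l) := by
  intro j hjl
  constructor
  · intro hone
    by_contra! hj
    have := sub_trailZeros_le_iff.1 (show l - trailZeros n x s l ≤ j by omega) j le_rfl hjl
    rw [hone] at this
    contradiction
  · intro hj
    exact (lt_leadOnes_iff.1 hj).2 j le_rfl

theorem leadOnes_add_trailZeros_eq_iff :
    leadOnes n x s l + trailZeros n x s l = l ↔
      ∃ i ≤ l, ∀ j < l, (bitAt n x (s + j) = true ↔ j < i) := by
  constructor
  · intro h
    exact ⟨_, by omega, forall_of_leadOnes_add_trailZeros_eq h⟩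
  · rintro ⟨i, hi, hx⟩
    rw [leadOnes_eq_of_forall hi hx, trailZeros_eq_of_forall hi hx]
    omega

theorem leadOnes_congr (h : ∀ j < l, bitAt n y (s + j) = bitAt n x (s + j)) :
    leadOnes n y s l = leadOnes n x s l := by
  unfold leadOnes
  congr 1
  refine filter_congr fun a ha => forall₂_congr fun j hj => ?_
  rw [h j (by simp only [mem_range] at ha; omega)]

theorem trailZeros_congr (h : ∀ j < l, bitAt n y (s + j) = bitAt n x (s + j)) :
    trailZeros n y s l = trailZeros n x s l := by
  unfold trailZeros
  congr 1
  exact filter_congr fun a _ => by simp +contextual [h]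

end Block

def fillBlock (n : ℕ) (x : Fin n → Bool) (s l i : ℕ) : Fin n → Bool :=
  fun p => if s ≤ p.val ∧ p.val < s + l then decide (p.val < s + i) else x p

section FillBlock

variable {n : ℕ} {x : Fin n → Bool} {s l i : ℕ}

theorem bitAt_fillBlock (hsl : s + l ≤ n) (p : ℕ) :
    bitAt n (fillBlock n x s l i) p =
      if s ≤ p ∧ p < s + l then decide (p < s + i) else bitAt n x p := by
  unfold bitAt fillBlock
  split_ifs <;> first | rfl | omega

theorem bitAt_fillBlock_of_not_mem (hsl : s + l ≤ n) {p : ℕ} (hp : p < s ∨ s + l ≤ p) :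
    bitAt n (fillBlock n x s l i) p = bitAt n x p := by
  rw [bitAt_fillBlock hsl, if_neg (by omega)]

theorem bitAt_fillBlock_add_iff (hsl : s + l ≤ n) :
    ∀ j < l, (bitAt n (fillBlock n x s l i) (s + j) = true ↔ j < i) := by
  intro j hj
  simp [bitAt_fillBlock hsl, hj]

theorem leadOnes_fillBlock (hsl : s + l ≤ n) (hi : i ≤ l) :
    leadOnes n (fillBlock n x s l i) s l = i :=
  leadOnes_eq_of_forall hi (bitAt_fillBlock_add_iff hsl)

theorem trailZeros_fillBlock (hsl : s + l ≤ n) (hi : i ≤ l) :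
    trailZeros n (fillBlock n x s l i) s l = l - i :=
  trailZeros_eq_of_forall hi (bitAt_fillBlock_add_iff hsl)

end FillBlock

theorem add_lt_mul_or_mul_add_le_of_ne {k k' l j : ℕ} (hk : k' ≠ k) (hj : j < l) :
    k' * l + j < k * l ∨ k * l + l ≤ k' * l + j := by
  rcases Nat.lt_or_gt_of_ne hk with h | h
  · have := Nat.mul_le_mul_right l (Nat.succ_le_of_lt h)
    rw [Nat.succ_mul] at this
    omega
  · have := Nat.mul_le_mul_right l (Nat.succ_le_of_lt h)
    rw [Nat.succ_mul] at this
    omega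

section LOTZ

variable {m n : ℕ} {x y : Fin n → Bool}

theorem div_two_mul_two_mul_div_le (m n : ℕ) : m / 2 * (2 * n / m) ≤ n := by
  have h₁ := Nat.mul_div_le (2 * n) m
  have h₂ := Nat.mul_le_mul_right (2 * n / m) (Nat.mul_div_le m 2)
  nlinarith

theorem mLOTZ_two_mul (k : ℕ) (hk : 2 * k < m) :
    mLOTZ m n x ⟨2 * k, hk⟩ = leadOnes n x (k * (2 * n / m)) (2 * n / m) := by
  simp [mLOTZ]

theorem mLOTZ_two_mul_add_one (k : ℕ) (hk : 2 * k + 1 < m) :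
    mLOTZ m n x ⟨2 * k + 1, hk⟩ = trailZeros n x (k * (2 * n / m)) (2 * n / m) := by
  simp [mLOTZ, Nat.add_mod, show (2 * k + 1) / 2 = k by omega]

theorem mLOTZ_congr (o : Fin m)
    (h : ∀ j < 2 * n / m,
      bitAt n y (o / 2 * (2 * n / m) + j) = bitAt n x (o / 2 * (2 * n / m) + j)) :
    mLOTZ m n y o = mLOTZ m n x o := by
  unfold mLOTZ
  split_ifs
  · exact leadOnes_congr h
  · exact trailZeros_congr h

theorem strictDom_fillBlock {k : ℕ} (hk : k < m / 2)
    (hlt : leadOnes n x (k * (2 * n / m)) (2 * n / m) +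
      trailZeros n x (k * (2 * n / m)) (2 * n / m) < 2 * n / m) :
    StrictDom (mLOTZ m n (fillBlock n x (k * (2 * n / m)) (2 * n / m)
      (leadOnes n x (k * (2 * n / m)) (2 * n / m)))) (mLOTZ m n x) := by
  have hsl : k * (2 * n / m) + 2 * n / m ≤ n := by
    have := Nat.mul_le_mul_right (2 * n / m) (Nat.succ_le_of_lt hk)
    rw [Nat.succ_mul] at this
    exact this.trans (div_two_mul_two_mul_div_le m n)
  have hL : leadOnes n x (k * (2 * n / m)) (2 * n / m) ≤ 2 * n / m := by omega
  refine ⟨fun o => ?_, ⟨⟨2 * k + 1, by omega⟩, ?_⟩⟩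
  · by_cases ho : o / 2 = k
    · unfold mLOTZ
      rw [ho]
      split_ifs
      · rw [leadOnes_fillBlock hsl hL]
      · rw [trailZeros_fillBlock hsl hL]
        omega
    · exact (mLOTZ_congr o fun j hj => bitAt_fillBlock_of_not_mem hsl
        (add_lt_mul_or_mul_add_le_of_ne ho hj)).ge
  · rw [mLOTZ_two_mul_add_one, mLOTZ_two_mul_add_one, trailZeros_fillBlock hsl hL]
    omega

theorem not_strictDom_of_forall_leadOnes_add_trailZeros_eq (hm : Even m)
    (hx : ∀ k < m / 2, leadOnes n x (k * (2 * n / m)) (2 * n / m) +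
      trailZeros n x (k * (2 * n / m)) (2 * n / m) = 2 * n / m) :
    ¬StrictDom (mLOTZ m n y) (mLOTZ m n x) := by
  rintro ⟨hle, o, hlt⟩
  obtain ⟨r, rfl⟩ := hm
  have hones := hle ⟨2 * (o / 2), by omega⟩
  have hzeros := hle ⟨2 * (o / 2) + 1, by omega⟩
  rw [mLOTZ_two_mul, mLOTZ_two_mul] at hones
  rw [mLOTZ_two_mul_add_one, mLOTZ_two_mul_add_one] at hzeros
  have hy := leadOnes_add_trailZeros_le (n := n) (x := y)
    (s := o / 2 * (2 * n / (r + r))) (l := 2 * n / (r + r))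
  have := hx (o / 2) (by omega)
  unfold mLOTZ at hlt
  split_ifs at hlt <;> omega

theorem paretoOpt_iff_forall_leadOnes_add_trailZeros_eq (hm : Even m) :
    ParetoOpt m n x ↔ ∀ k < m / 2, leadOnes n x (k * (2 * n / m)) (2 * n / m) +
      trailZeros n x (k * (2 * n / m)) (2 * n / m) = 2 * n / m := by
  refine ⟨fun hx k hk => ?_,
    fun hx _ => not_strictDom_of_forall_leadOnes_add_trailZeros_eq hm hx⟩
  by_contra hne
  exact hx _ (strictDom_fillBlock hk (lt_of_le_of_ne leadOnes_add_trailZeros_le hne))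

end LOTZ

theorem stmt0_general (m n : ℕ) (hm : Even m)
    (x : Fin n → Bool) :
    ParetoOpt m n x ↔
      ∀ k < m / 2, ∃ i ≤ 2 * n / m, ∀ j < 2 * n / m,
        (bitAt n x (k * (2 * n / m) + j) = true ↔ j < i) := by
  rw [paretoOpt_iff_forall_leadOnes_add_trailZeros_eq hm]
  exact forall₂_congr fun _ _ => leadOnes_add_trailZeros_eq_iff

/-- a bit string is Pareto-optimal for `m`-objective LOTZ iff each of its
`m/2` blocks of length `n' = 2n/m` has the form `1^i 0^(n'-i)`. -/
theorem stmt0 (m n : ℕ) (hm : Even m) (hm4 : 4 ≤ m) (hdvd : m / 2 ∣ n)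
    (x : Fin n → Bool) :
    ParetoOpt m n x ↔
      ∀ k < m / 2, ∃ i ≤ 2 * n / m, ∀ j < 2 * n / m,
        (bitAt n x (k * (2 * n / m) + j) = true ↔ j < i) :=
  stmt0_general m n hm x
end

section
/- If each of b ≤ Δ specific items must all be removed, where the removal process consists of N' independent uniform picks (with replacement) among F individuals and removing all picked ones, and A ≥ 0, |F_1| ≥ N' + b, then the probability that all b items are picked at least once is at least ((N' - b + 1)/(e·F))^b, where F = |F_1| - A ≥ N'. -/
/-!
Choose the positions at which the distinguished items `0, …, b-1` are picked (an embedding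
`Fin b ↪ Fin N'`, in `N'.descFactorial b` ways) and fill every other position with a
non-distinguished item (`(F - b) ^ (N' - b)` ways); different choices give different pick
sequences. Hence the probability is at least
`N'.descFactorial b * (F - b) ^ (N' - b) / F ^ N' ≥ ((N' - b + 1) / F) ^ b * (1 - b / F) ^ (N' - b)`,
and `(1 - b / F) ^ (F - b) ≥ e⁻ᵇ` because `log x ≥ 1 - 1 / x`.
-/

open Finset Function Fintype

section Covering

variable {α β γ : Type*} [Fintype γ] [DecidableEq α]

def coveringMap (e : γ ↪ β) (g : γ ↪ α)
    (h : {a // a ∉ Set.range g} → {y // y ∉ Set.range e}) (a : α) : β :=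
  if ha : a ∈ Set.range g then e (g.invOfMemRange ⟨a, ha⟩) else h ⟨a, ha⟩

variable (e : γ ↪ β) (g : γ ↪ α) (h : {a // a ∉ Set.range g} → {y // y ∉ Set.range e})

@[simp]
lemma coveringMap_apply_embedding (c : γ) : coveringMap e g h (g c) = e c := by
  simp [coveringMap]

lemma coveringMap_apply_of_notMem {a : α} (ha : a ∉ Set.range g) :
    coveringMap e g h a = h ⟨a, ha⟩ := by
  simp [coveringMap, ha]

lemma coveringMap_injective :
    Injective fun p : Σ g : γ ↪ α, ({a // a ∉ Set.range g} → {y // y ∉ Set.range e}) =>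
      coveringMap e p.1 p.2 := by
  rintro ⟨g, h⟩ ⟨g', h'⟩ (heq : coveringMap e g h = coveringMap e g' h')
  obtain rfl : g = g' := by
    ext c
    have hc : coveringMap e g' h' (g c) = e c := by rw [← heq, coveringMap_apply_embedding]
    by_cases hg' : g c ∈ Set.range g'
    · obtain ⟨c', hc'⟩ := hg'
      rw [← hc', coveringMap_apply_embedding] at hc
      rw [← hc', e.injective hc]
    · rw [coveringMap_apply_of_notMem e g' h' hg'] at hc
      exact absurd ⟨c, hc.symm⟩ (h' ⟨g c, hg'⟩).2
  obtain rfl : h = h' := by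
    funext ⟨a, ha⟩
    apply Subtype.ext
    rw [← coveringMap_apply_of_notMem e g h ha, heq, coveringMap_apply_of_notMem]
  rfl

lemma card_notMem_range [Fintype α] : card {a // a ∉ Set.range g} = card α - card γ := by
  rw [Fintype.card_subtype_compl, ← Set.card_range_of_injective g.injective]

lemma descFactorial_mul_pow_le_card_covering [Fintype α] [Fintype β] [DecidableEq β] :
    (card α).descFactorial (card γ) * (card β - card γ) ^ (card α - card γ) ≤
      #{f : α → β | ∀ c, ∃ a, f a = e c} :=
  calc (card α).descFactorial (card γ) * (card β - card γ) ^ (card α - card γ)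
      = card (Σ g : γ ↪ α, ({a // a ∉ Set.range g} → {y // y ∉ Set.range e})) := by
        rw [Fintype.card_sigma]
        simp only [card_fun, card_notMem_range, sum_const, card_univ, card_embedding_eq,
          smul_eq_mul]
    _ ≤ card {f : α → β // ∀ c, ∃ a, f a = e c} :=
        Fintype.card_le_of_injective
          (fun p => ⟨coveringMap e p.1 p.2, fun c => ⟨p.1 c, coveringMap_apply_embedding ..⟩⟩)
          fun _ _ hpq => coveringMap_injective e (congrArg Subtype.val hpq)
    _ = _ := Fintype.card_subtype _

end Covering

lemma descFactorial_mul_pow_le_card_forall_lt_exists {n b F : ℕ} (hbF : b ≤ F) :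
    n.descFactorial b * (F - b) ^ (n - b) ≤
      #{ω : Fin n → Fin F | ∀ t : Fin F, (t : ℕ) < b → ∃ s, ω s = t} := by
  have hcover := descFactorial_mul_pow_le_card_covering (α := Fin n) (Fin.castLEEmb hbF)
  simp only [Fintype.card_fin] at hcover
  refine hcover.trans (card_le_card fun ω hω => ?_)
  simp only [mem_filter, mem_univ, true_and] at hω ⊢
  exact fun t ht => hω ⟨t, ht⟩

lemma sub_add_one_pow_le_descFactorial {n k : ℕ} (hk : k ≤ n + 1) :
    ((n : ℝ) - k + 1) ^ k ≤ n.descFactorial k := by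
  have := Nat.pow_sub_le_descFactorial n k
  rw [← Nat.cast_le (α := ℝ), Nat.cast_pow, Nat.cast_sub hk] at this
  push_cast at this
  rwa [sub_add_eq_add_sub]

open Real in
lemma exp_neg_le_sub_div_pow {b n F : ℕ} (hbF : b ≤ F) (hn : n ≤ F - b) :
    exp (-b) ≤ (((F : ℝ) - b) / F) ^ n := by
  have hgap : (0 : ℝ) ≤ F - b := sub_nonneg.2 (by exact_mod_cast hbF)
  refine le_trans ?_ (pow_le_pow_of_le_one (by positivity)
    (div_le_one_of_le₀ (sub_le_self _ b.cast_nonneg) F.cast_nonneg) hn)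
  rcases hbF.eq_or_lt with rfl | hbF
  · simp
  have hgap_pos : (0 : ℝ) < F - b := sub_pos.2 (by exact_mod_cast hbF)
  have hr : 0 < ((F : ℝ) - b) / F := div_pos hgap_pos (Nat.cast_pos.2 (by omega))
  have hlog : -(b : ℝ) ≤ ((F - b : ℕ) : ℝ) * log (((F : ℝ) - b) / F) :=
    calc -(b : ℝ) = ((F - b : ℕ) : ℝ) * (1 - (((F : ℝ) - b) / F)⁻¹) := by
          rw [Nat.cast_sub hbF.le]; field_simp; ring
      _ ≤ _ := by gcongr; exact one_sub_inv_le_log_of_pos hr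
  calc exp (-b) ≤ exp (((F - b : ℕ) : ℝ) * log (((F : ℝ) - b) / F)) := exp_le_exp.2 hlog
    _ = _ := by rw [exp_nat_mul, exp_log hr]

theorem stmt4_general (N' b F : ℕ) (hbN : b ≤ N') (hNF : N' ≤ F) :
    (((N' : ℝ) - b + 1) / (Real.exp 1 * F)) ^ b ≤
      ((Finset.univ.filter
          (fun ω : Fin N' → Fin F => ∀ t : Fin F, (t : ℕ) < b → ∃ s, ω s = t)).card : ℝ)
        / (F : ℝ) ^ N' := by
  have hbF : b ≤ F := hbN.trans hNF
  have hdesc := sub_add_one_pow_le_descFactorial (n := N') (k := b) (by omega)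
  have hexp := exp_neg_le_sub_div_pow (n := N' - b) hbF (by omega)
  have hcount := descFactorial_mul_pow_le_card_forall_lt_exists (n := N') hbF
  calc (((N' : ℝ) - b + 1) / (Real.exp 1 * F)) ^ b
      = ((N' : ℝ) - b + 1) ^ b * Real.exp (-b) / F ^ b := by
        rw [div_pow, mul_pow, ← Real.exp_nat_mul, mul_one, Real.exp_neg]
        ring
    _ ≤ N'.descFactorial b * (((F : ℝ) - b) / F) ^ (N' - b) / F ^ b := by gcongr
    _ = ((N'.descFactorial b * (F - b) ^ (N' - b) : ℕ) : ℝ) / F ^ N' := by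
        rw [div_pow, ← mul_div_assoc, div_div, ← pow_add, Nat.sub_add_cancel hbN]
        push_cast [Nat.cast_sub hbF]
        ring
    _ ≤ _ := by gcongr

/-- if `N'` picks are made independently and uniformly at random (with
replacement) from a set of `F` individuals containing `b` distinguished items
(`1 ≤ b ≤ N' ≤ F`), then the probability that every distinguished item is picked at
least once is at least `((N' - b + 1)/(e·F))^b`. -/
theorem stmt4 (N' b F : ℕ) (hb : 1 ≤ b) (hbN : b ≤ N') (hNF : N' ≤ F) :
    (((N' : ℝ) - b + 1) / (Real.exp 1 * F)) ^ b ≤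
      ((Finset.univ.filter
          (fun ω : Fin N' → Fin F => ∀ t : Fin F, (t : ℕ) < b → ∃ s, ω s = t)).card : ℝ)
        / (F : ℝ) ^ N' :=
  stmt4_general N' b F hbN hNF
end

section
/- Let x ∈ {0,1}^n and let y be obtained from x by standard bit mutation (each bit flipped independently with probability 1/n). Let m' = m/2 and suppose x has, in each of the m' blocks of length n' = 2n/m, a well-defined first zero from the left at position ℓ_i and last one from the right at position r_i (when they exist). If y is a Pareto-optimal point of m-objective LOTZ with f(y) ≠ f(x), then at least one of the at most 2m' bits at positions {ℓ_1, r_1, ..., ℓ_{m'}, r_{m'}} was flipped; consequently the probability that y is Pareto-optimal with objective value different from x is at most m/n. -/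
/-- Position `i` is the first zero (from the left) of its block of length `n' = 2n/m`. -/
def FirstZero (m n : ℕ) (x : Fin n → Bool) (i : Fin n) : Prop :=
  x i = false ∧ ∀ j : Fin n, (j : ℕ) / (2 * n / m) = (i : ℕ) / (2 * n / m) →
    (j : ℕ) < (i : ℕ) → x j = true

/-- Position `i` is the last one (from the right) of its block of length `n' = 2n/m`. -/
def LastOne (m n : ℕ) (x : Fin n → Bool) (i : Fin n) : Prop :=
  x i = true ∧ ∀ j : Fin n, (j : ℕ) / (2 * n / m) = (i : ℕ) / (2 * n / m) →
    (i : ℕ) < (j : ℕ) → x j = false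

/-! If no first zero and no last one of a block is flipped, no objective can increase: the
leading ones of a block end at its first zero and its trailing zeros start after its last one.
So a mutant that is Pareto-optimal with a new objective vector, and hence larger than `x` in
some objective, must have flipped one of these at most `m` positions (one per objective), and
each is flipped with probability `1/n`. -/

section LeadOnesTrailZeros

variable {n : ℕ} {x : Fin n → Bool} {s len : ℕ}

lemma bitAt_of_lt {i : ℕ} (h : i < n) : bitAt n x i = x ⟨i, h⟩ := dif_pos h

lemma lt_of_bitAt_eq_true {i : ℕ} (h : bitAt n x i = true) : i < n := by
  by_contra hi
  simp [bitAt, hi] at h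

lemma leadOnes_le_len : leadOnes n x s len ≤ len :=
  (Finset.card_filter_le _ _).trans (Finset.card_range len).le

lemma trailZeros_le_len : trailZeros n x s len ≤ len :=
  (Finset.card_filter_le _ _).trans (Finset.card_range len).le

lemma leadOnes_le_of_bitAt_eq_false {t : ℕ} (ht : bitAt n x (s + t) = false) :
    leadOnes n x s len ≤ t := by
  refine (Finset.card_le_card fun i hi => ?_).trans (Finset.card_range t).le
  simp only [Finset.mem_filter, Finset.mem_range] at hi ⊢
  by_contra! hti
  simp [hi.2 t hti] at ht

lemma le_leadOnes {t : ℕ} (h : t ≤ len) (hall : ∀ j < t, bitAt n x (s + j) = true) :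
    t ≤ leadOnes n x s len := by
  refine (Finset.card_range t).ge.trans (Finset.card_le_card fun i hi => ?_)
  simp only [Finset.mem_filter, Finset.mem_range] at hi ⊢
  exact ⟨by omega, fun j hj => hall j (by omega)⟩

lemma bitAt_eq_true_of_lt_leadOnes {j : ℕ} (h : j < leadOnes n x s len) :
    bitAt n x (s + j) = true := by
  by_contra hj
  have := leadOnes_le_of_bitAt_eq_false (len := len) (Bool.of_not_eq_true hj)
  omega

lemma bitAt_leadOnes (h : leadOnes n x s len < len) :
    bitAt n x (s + leadOnes n x s len) = false := by
  by_contra hL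
  have := le_leadOnes (x := x) (s := s) h fun j hj => by
    rcases Nat.lt_succ_iff_lt_or_eq.1 hj with hj | rfl
    · exact bitAt_eq_true_of_lt_leadOnes hj
    · exact Bool.not_eq_false _ ▸ hL
  omega

lemma trailZeros_le_of_bitAt_eq_true {t : ℕ} (htn : t < len) (ht : bitAt n x (s + t) = true) :
    trailZeros n x s len ≤ len - (t + 1) := by
  refine (Finset.card_le_card fun i hi => ?_).trans (Nat.card_Ico (t + 1) len).le
  simp only [Finset.mem_filter, Finset.mem_range, Finset.mem_Ico] at hi ⊢
  refine ⟨?_, hi.1⟩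
  by_contra! hti
  simp [hi.2 t (by omega) htn] at ht

lemma le_trailZeros {a : ℕ} (hall : ∀ j, a ≤ j → j < len → bitAt n x (s + j) = false) :
    len - a ≤ trailZeros n x s len := by
  refine (Nat.card_Ico a len).ge.trans (Finset.card_le_card fun i hi => ?_)
  simp only [Finset.mem_filter, Finset.mem_range, Finset.mem_Ico] at hi ⊢
  exact ⟨hi.2, fun j hij hj => hall j (by omega) hj⟩

lemma bitAt_eq_false_of_trailZeros {j : ℕ} (hj : len - trailZeros n x s len ≤ j) (hjl : j < len) :
    bitAt n x (s + j) = false := by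
  by_contra hb
  have := trailZeros_le_of_bitAt_eq_true hjl (Bool.not_eq_false _ ▸ hb)
  omega

lemma bitAt_trailZeros (h : trailZeros n x s len < len) :
    bitAt n x (s + (len - trailZeros n x s len - 1)) = true := by
  by_contra hb
  have := le_trailZeros (x := x) (s := s) (len := len) (a := len - trailZeros n x s len - 1)
    fun j hj hjl => by
      rcases hj.lt_or_eq with hj | rfl
      · exact bitAt_eq_false_of_trailZeros (by omega) hjl
      · exact Bool.of_not_eq_true hb
  omega

end LeadOnesTrailZeros

section Blocks

variable {m n : ℕ} {x y : Fin n → Bool}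

lemma le_and_lt_of_div_eq {j b k : ℕ} (hk : 0 < k) (h : j / k = b) : b * k ≤ j ∧ j < b * k + k := by
  have := (Nat.div_eq_iff hk).1 h
  omega

lemma FirstZero.unique {i j : Fin n} (hi : FirstZero m n x i) (hj : FirstZero m n x j)
    (hb : (i : ℕ) / (2 * n / m) = (j : ℕ) / (2 * n / m)) : i = j := by
  rcases lt_trichotomy (i : ℕ) j with h | h | h
  · simpa [hi.1] using hj.2 i hb h
  · exact Fin.ext h
  · simpa [hj.1] using hi.2 j hb.symm h

lemma LastOne.unique {i j : Fin n} (hi : LastOne m n x i) (hj : LastOne m n x j)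
    (hb : (i : ℕ) / (2 * n / m) = (j : ℕ) / (2 * n / m)) : i = j := by
  rcases lt_trichotomy (i : ℕ) j with h | h | h
  · simpa [hj.1] using hi.2 j hb.symm h
  · exact Fin.ext h
  · simpa [hi.1] using hj.2 i hb h

lemma exists_firstZero_of_leadOnes_lt {b : ℕ}
    (h : leadOnes n x (b * (2 * n / m)) (2 * n / m) < leadOnes n y (b * (2 * n / m)) (2 * n / m)) :
    ∃ i : Fin n, (i : ℕ) / (2 * n / m) = b ∧ FirstZero m n x i ∧ y i = true := by
  set k := 2 * n / m with hk
  set L := leadOnes n x (b * k) k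
  have hLk : L < k := h.trans_le leadOnes_le_len
  have hy : bitAt n y (b * k + L) = true := bitAt_eq_true_of_lt_leadOnes h
  have hp := lt_of_bitAt_eq_true hy
  have hblock : (b * k + L) / k = b := (Nat.div_eq_iff (by omega)).2 (by omega)
  refine ⟨⟨b * k + L, hp⟩, hblock, ⟨?_, fun j hj hji => ?_⟩, by rwa [bitAt_of_lt hp] at hy⟩
  · rw [← bitAt_of_lt (x := x) hp]
    exact bitAt_leadOnes hLk
  · rw [← hk] at hj
    have hji : (j : ℕ) < b * k + L := hji
    have hjb := le_and_lt_of_div_eq (by omega) (hj.trans hblock)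
    have hjx := bitAt_eq_true_of_lt_leadOnes (x := x) (s := b * k) (len := k) (j := j - b * k)
      (by omega)
    rwa [Nat.add_sub_cancel' hjb.1, bitAt_of_lt j.isLt] at hjx

lemma exists_lastOne_of_trailZeros_lt {b : ℕ}
    (h : trailZeros n x (b * (2 * n / m)) (2 * n / m) <
      trailZeros n y (b * (2 * n / m)) (2 * n / m)) :
    ∃ i : Fin n, (i : ℕ) / (2 * n / m) = b ∧ LastOne m n x i ∧ y i = false := by
  set k := 2 * n / m with hk
  set Z := trailZeros n x (b * k) k
  have hZk : Z < k := h.trans_le trailZeros_le_len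
  have hx : bitAt n x (b * k + (k - Z - 1)) = true := bitAt_trailZeros hZk
  have hp := lt_of_bitAt_eq_true hx
  have hblock : (b * k + (k - Z - 1)) / k = b := (Nat.div_eq_iff (by omega)).2 (by omega)
  refine ⟨⟨_, hp⟩, hblock, ⟨by rwa [bitAt_of_lt hp] at hx, fun j hj hji => ?_⟩, ?_⟩
  · rw [← hk] at hj
    have hji : b * k + (k - Z - 1) < j := hji
    have hjb := le_and_lt_of_div_eq (by omega) (hj.trans hblock)
    have hjx := bitAt_eq_false_of_trailZeros (x := x) (s := b * k) (len := k) (j := j - b * k)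
      (by omega) (by omega)
    rwa [Nat.add_sub_cancel' hjb.1, bitAt_of_lt j.isLt] at hjx
  · rw [← bitAt_of_lt (x := y) hp]
    exact bitAt_eq_false_of_trailZeros (s := b * k) (len := k) (by omega) (by omega)

/-- The position of `x` that must be flipped for objective `k` to increase. -/
def IsCriticalPos (m n : ℕ) (x : Fin n → Bool) (k : Fin m) (i : Fin n) : Prop :=
  (i : ℕ) / (2 * n / m) = k / 2 ∧
    if (k : ℕ) % 2 = 0 then FirstZero m n x i else LastOne m n x i

lemma IsCriticalPos.firstZero_or_lastOne {k : Fin m} {i : Fin n} (h : IsCriticalPos m n x k i) :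
    FirstZero m n x i ∨ LastOne m n x i := by
  have h2 := h.2
  split_ifs at h2
  exacts [Or.inl h2, Or.inr h2]

lemma IsCriticalPos.unique {k : Fin m} {i j : Fin n} (hi : IsCriticalPos m n x k i)
    (hj : IsCriticalPos m n x k j) : i = j := by
  have hb := hi.1.trans hj.1.symm
  have hi2 := hi.2
  have hj2 := hj.2
  split_ifs at hi2 hj2
  exacts [hi2.unique hj2 hb, hi2.unique hj2 hb]

lemma exists_isCriticalPos_of_mLOTZ_lt {k : Fin m} (h : mLOTZ m n x k < mLOTZ m n y k) :
    ∃ i, IsCriticalPos m n x k i ∧ y i ≠ x i := by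
  unfold mLOTZ at h
  split_ifs at h with hk
  · obtain ⟨i, hb, hi, hy⟩ := exists_firstZero_of_leadOnes_lt h
    exact ⟨i, ⟨hb, by rwa [if_pos hk]⟩, by simp [hy, hi.1]⟩
  · obtain ⟨i, hb, hi, hy⟩ := exists_lastOne_of_trailZeros_lt h
    exact ⟨i, ⟨hb, by rwa [if_neg hk]⟩, by simp [hy, hi.1]⟩

open Classical in
lemma card_biUnion_isCriticalPos_le (m n : ℕ) (x : Fin n → Bool) :
    (Finset.univ.biUnion fun k : Fin m => Finset.univ.filter (IsCriticalPos m n x k)).card ≤ m := by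
  refine (Finset.card_biUnion_le_card_mul _ _ 1 fun k _ => ?_).trans (by simp)
  exact Finset.card_le_one.2 fun i hi j hj =>
    (Finset.mem_filter.1 hi).2.unique (Finset.mem_filter.1 hj).2

end Blocks

lemma ParetoOpt.exists_lt_of_ne {m n : ℕ} {x y : Fin n → Bool} (hy : ParetoOpt m n y)
    (hne : mLOTZ m n y ≠ mLOTZ m n x) : ∃ k, mLOTZ m n x k < mLOTZ m n y k := by
  by_contra! hle
  refine hy x ⟨hle, ?_⟩
  by_contra! hge
  exact hne (funext fun k => (hle k).antisymm (hge k))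

section BitMutation

variable {ι : Type*} [Fintype ι] (p : ℝ)

def flipProb (ω : ι → Bool) : ℝ := ∏ i, if ω i = true then p else 1 - p

variable {p}

lemma flipProb_nonneg (hp0 : 0 ≤ p) (hp1 : p ≤ 1) (ω : ι → Bool) : 0 ≤ flipProb p ω :=
  Finset.prod_nonneg fun i _ => by split_ifs <;> linarith

lemma sum_flipProb_of_eq_true [DecidableEq ι] (i₀ : ι) :
    ∑ ω : ι → Bool, (if ω i₀ = true then flipProb p ω else 0) = p := by
  let f : ι → Bool → ℝ := fun i b =>
    if i = i₀ then (if b = true then p else 0) else (if b = true then p else 1 - p)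
  have hterm : ∀ ω : ι → Bool,
      (if ω i₀ = true then flipProb p ω else 0) = ∏ i, f i (ω i) := by
    intro ω
    by_cases h : ω i₀ = true
    · rw [if_pos h]
      refine Finset.prod_congr rfl fun i _ => ?_
      by_cases hi : i = i₀ <;> simp [f, hi, h]
    · rw [if_neg h]
      exact (Finset.prod_eq_zero (Finset.mem_univ i₀) (by simp [f, h])).symm
  rw [Finset.sum_congr rfl fun ω _ => hterm ω, ← Fintype.prod_sum]
  have hfactor : ∀ i, ∑ b, f i b = if i = i₀ then p else 1 := by
    intro i
    by_cases hi : i = i₀ <;> simp [f, hi]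
  rw [Finset.prod_congr rfl fun i _ => hfactor i]
  simp

lemma sum_flipProb_le_card_mul [DecidableEq ι] (hp0 : 0 ≤ p) (hp1 : p ≤ 1)
    (E : (ι → Bool) → Prop) [DecidablePred E] (J : Finset ι)
    (hE : ∀ ω, E ω → ∃ i ∈ J, ω i = true) :
    ∑ ω, (if E ω then flipProb p ω else 0) ≤ J.card * p := by
  have hnonneg : ∀ ω : ι → Bool, 0 ≤ flipProb p ω := flipProb_nonneg hp0 hp1
  calc ∑ ω, (if E ω then flipProb p ω else 0)
      ≤ ∑ ω, ∑ i ∈ J, (if ω i = true then flipProb p ω else 0) := by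
        refine Finset.sum_le_sum fun ω _ => ?_
        split_ifs with h
        · obtain ⟨i, hi, hω⟩ := hE ω h
          refine le_of_eq_of_le (if_pos hω).symm
            (Finset.single_le_sum (f := fun i => if ω i = true then flipProb p ω else 0)
              (fun j _ => ?_) hi)
          split_ifs <;> simp [hnonneg]
        · exact Finset.sum_nonneg fun j _ => by split_ifs <;> simp [hnonneg]
    _ = ∑ i ∈ J, ∑ ω, (if ω i = true then flipProb p ω else 0) := Finset.sum_comm
    _ = J.card * p := by simp [sum_flipProb_of_eq_true]

end BitMutation

lemma exists_flipped_isCriticalPos {m n : ℕ} {x ω : Fin n → Bool}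
    (hE : ParetoOpt m n (fun i => xor (x i) (ω i)) ∧
      mLOTZ m n (fun i => xor (x i) (ω i)) ≠ mLOTZ m n x) :
    ∃ k i, IsCriticalPos m n x k i ∧ ω i = true := by
  obtain ⟨k, hk⟩ := hE.1.exists_lt_of_ne hE.2
  obtain ⟨i, hi, hflip⟩ := exists_isCriticalPos_of_mLOTZ_lt hk
  exact ⟨k, i, hi, by revert hflip; cases x i <;> cases ω i <;> simp⟩

open Classical in
theorem stmt7_general (m n : ℕ) (x : Fin n → Bool) :
    (∀ ω : Fin n → Bool,
        (ParetoOpt m n (fun i => xor (x i) (ω i)) ∧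
          mLOTZ m n (fun i => xor (x i) (ω i)) ≠ mLOTZ m n x) →
        ∃ i : Fin n, ω i = true ∧ (FirstZero m n x i ∨ LastOne m n x i))
    ∧ (∑ ω : Fin n → Bool,
          (if ParetoOpt m n (fun i => xor (x i) (ω i)) ∧
                mLOTZ m n (fun i => xor (x i) (ω i)) ≠ mLOTZ m n x
            then ∏ i : Fin n, (if ω i = true then (1 : ℝ) / n else 1 - 1 / n)
            else 0))
        ≤ (m : ℝ) / n := by
  refine ⟨fun ω hE => ?_, ?_⟩
  · obtain ⟨k, i, hi, hω⟩ := exists_flipped_isCriticalPos hE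
    exact ⟨i, hω, hi.firstZero_or_lastOne⟩
  have hp0 : (0 : ℝ) ≤ 1 / n := by positivity
  have hp1 : (1 : ℝ) / n ≤ 1 := (one_div (n : ℝ)).symm ▸ Nat.cast_inv_le_one n
  have hcard : ((Finset.univ.biUnion fun k : Fin m =>
      Finset.univ.filter (IsCriticalPos m n x k)).card : ℝ) ≤ m := by
    exact_mod_cast card_biUnion_isCriticalPos_le m n x
  calc _ ≤ _ := sum_flipProb_le_card_mul hp0 hp1 _ _ fun ω hE => by
        obtain ⟨k, i, hi, hω⟩ := exists_flipped_isCriticalPos hE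
        exact ⟨i, Finset.mem_biUnion.2 ⟨k, Finset.mem_univ _, by simpa using hi⟩, hω⟩
    _ ≤ m * (1 / n) := mul_le_mul_of_nonneg_right hcard hp0
    _ = (m : ℝ) / n := by ring

open Classical in
/-- if standard bit mutation (flip pattern `ω`, each bit flipped
independently with probability `1/n`) turns `x` into a Pareto-optimal point of
`m`-objective LOTZ with a different objective value, then some flipped position is a
first zero or last one of its block; consequently the probability of this event is at
most `m/n`. -/
theorem stmt7 (m n : ℕ) (hm : Even m) (hm4 : 4 ≤ m) (hdvd : m / 2 ∣ n) (hn : 0 < n)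
    (x : Fin n → Bool) :
    (∀ ω : Fin n → Bool,
        (ParetoOpt m n (fun i => xor (x i) (ω i)) ∧
          mLOTZ m n (fun i => xor (x i) (ω i)) ≠ mLOTZ m n x) →
        ∃ i : Fin n, ω i = true ∧ (FirstZero m n x i ∨ LastOne m n x i))
    ∧ (∑ ω : Fin n → Bool,
          (if ParetoOpt m n (fun i => xor (x i) (ω i)) ∧
                mLOTZ m n (fun i => xor (x i) (ω i)) ≠ mLOTZ m n x
            then ∏ i : Fin n, (if ω i = true then (1 : ℝ) / n else 1 - 1 / n)
            else 0))
        ≤ (m : ℝ) / n :=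
  stmt7_general m n x
end
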